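/- For any finite non-solvable group G, the solvable graph Γ_s(G) is not a star graph, i.e., there is no vertex u of Γ_s(G) such that the edges of Γ_s(G) are exactly those joining u to every other vertex. -/

import Mathlib

/-- The solvabilizer of `u` in `G`: the set of `v` such that `⟨u, v⟩` is solvable. -/
def solvabilizer (G : Type*) [Group G] (u : G) : Set G :=
  {v | IsSolvable (Subgroup.closure {u, v})}

/-- The solvable radical `Sol(G)`: elements `u` with `⟨u, v⟩` solvable for all `v`. -/
def solRadical (G : Type*) [Group G] : Set G :=
  {u | ∀ v : G, IsSolvable (Subgroup.closure {u, v})}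

/-- The solvable graph of `G`: vertex set `G \ Sol(G)`, two distinct vertices `u`, `v`
adjacent iff `⟨u, v⟩` is solvable. -/
def solvableGraph (G : Type*) [Group G] : SimpleGraph {u : G // u ∉ solRadical G} where
  Adj u v := u ≠ v ∧ IsSolvable (Subgroup.closure {(u : G), (v : G)})
  symm := by
    constructor
    rintro u v ⟨hne, hs⟩
    exact ⟨hne.symm, by rwa [Set.pair_comm]⟩
  loopless := by constructor; rintro u ⟨hne, _⟩; exact hne rfl

/-! The centre `u` of a star is adjacent to every other vertex, `⟨u, u⟩` is cyclic and
`⟨u, v⟩` is solvable for `v ∈ Sol(G)`; so `u ∈ Sol(G)`, and `u` is not a vertex after all. -/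

open Subgroup

lemma isSolvable_closure_singleton {G : Type*} [Group G] (u : G) :
    Group.IsSolvable (closure ({u} : Set G)) := by
  rw [← zpowers_eq_closure]
  let := IsCyclic.commGroup (α := zpowers u)
  infer_instance

lemma mem_solRadical_of_forall_ne {G : Type*} [Group G] {u : G}
    (h : ∀ v, v ∉ solRadical G → v ≠ u → Group.IsSolvable (closure {u, v})) :
    u ∈ solRadical G := by
  intro v
  by_cases hv : v ∈ solRadical G
  · rw [Set.pair_comm]
    exact hv u
  by_cases hvu : v = u
  · rw [hvu, Set.pair_eq_singleton]
    exact isSolvable_closure_singleton u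
  exact h v hv hvu

theorem solvableGraph_not_star {G : Type*} [Group G] :
    ¬ ∃ u : {x : G // x ∉ solRadical G},
        ∀ v w : {x : G // x ∉ solRadical G},
          (solvableGraph G).Adj v w ↔ ((v = u ∧ w ≠ u) ∨ (w = u ∧ v ≠ u)) := by
  rintro ⟨u, hstar⟩
  refine u.2 (mem_solRadical_of_forall_ne fun v hv hvu => ?_)
  have hne : (⟨v, hv⟩ : {x : G // x ∉ solRadical G}) ≠ u := fun h => hvu (congrArg Subtype.val h)
  exact ((hstar u ⟨v, hv⟩).mpr (Or.inl ⟨rfl, hne⟩)).2
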